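/- Let G₁ = (V₁, E₁) and G₂ = (V₂, E₂) be finite simple graphs and let f : V₁ → V₂ be an injective map such that {f(v), f(w)} ∈ E₂ whenever {v, w} ∈ E₁. Then the k-linear map X(f) : X(G₁) → X(G₂) determined on basis elements by X(f)(b_v) = b_{f(v)} for v ∈ V₁ and X(f)(b_e) = b_{f(e)} for e ∈ E₁ (where f({v,w}) = {f(v), f(w)}) is a homomorphism of k-algebras, i.e., X(f)(x*y) = X(f)(x) * X(f)(y) for all x, y ∈ X(G₁). -/

import Mathlib

open scoped BigOperators

variable (k : Type*) [Field k]

section Defs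

variable {V : Type*} [Fintype V] [DecidableEq V]

/-- The square `b i * b i` of the `i`-th natural basis vector of the evolution algebra
`X(G)` attached to a simple graph `G`: for a vertex `v`, `b_v * b_v = b_v`; for an edge
`e = {v, w}`, `b_e * b_e = b_e + b_v + b_w`. -/
noncomputable def graphSq (G : SimpleGraph V) [DecidableRel G.Adj] :
    (V ⊕ ↥G.edgeSet) → (V ⊕ ↥G.edgeSet) → k
  | Sum.inl v => Pi.single (Sum.inl v) 1
  | Sum.inr e => Pi.single (Sum.inr e) 1 +
      ∑ v ∈ Finset.univ.filter (· ∈ (e : Sym2 V)), Pi.single (Sum.inl v) 1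

/-- The multiplication of the evolution algebra `X(G)` attached to a simple graph `G`,
as a `k`-bilinear map on the space of functions `(V ⊕ G.edgeSet) → k`.  Distinct natural
basis vectors multiply to zero, and the squares are given by `graphSq`. -/
noncomputable def graphMul (G : SimpleGraph V) [DecidableRel G.Adj] :
    ((V ⊕ ↥G.edgeSet) → k) →ₗ[k] ((V ⊕ ↥G.edgeSet) → k) →ₗ[k] ((V ⊕ ↥G.edgeSet) → k) :=
  LinearMap.mk₂ k (fun x y => ∑ i, (x i * y i) • graphSq k G i)
    (by intro x x' y; simp [add_mul, add_smul, Finset.sum_add_distrib])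
    (by intro c x y; simp [Finset.smul_sum, smul_smul, mul_assoc])
    (by intro x y y'; simp [mul_add, add_smul, Finset.sum_add_distrib])
    (by intro c x y; simp [Finset.smul_sum, smul_smul, mul_assoc, mul_left_comm])

end Defs

section Morphisms

variable {V₁ V₂ : Type*} [Fintype V₁] [DecidableEq V₁] [Fintype V₂] [DecidableEq V₂]

/-- The map induced on natural-basis index sets by a graph morphism `f : G₁ → G₂`:
a vertex `v` is sent to `f v` and an edge `{v, w}` to `{f v, f w}`. -/
def graphIdxMap (G₁ : SimpleGraph V₁) (G₂ : SimpleGraph V₂) (f : V₁ → V₂)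
    (hf : ∀ ⦃v w : V₁⦄, G₁.Adj v w → G₂.Adj (f v) (f w)) :
    V₁ ⊕ ↥G₁.edgeSet → V₂ ⊕ ↥G₂.edgeSet
  | Sum.inl v => Sum.inl (f v)
  | Sum.inr e => Sum.inr ⟨Sym2.map f (e : Sym2 V₁), by
      obtain ⟨s, hs⟩ := e
      induction s using Sym2.ind with
      | _ v w => simpa using hf (by simpa using hs)⟩

/-- The `k`-linear map `X(f) : X(G₁) → X(G₂)` induced by a graph morphism `f`, sending
each natural basis vector of `X(G₁)` to the corresponding natural basis vector of
`X(G₂)`. -/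
noncomputable def graphXmap (G₁ : SimpleGraph V₁) (G₂ : SimpleGraph V₂)
    [DecidableRel G₁.Adj] [DecidableRel G₂.Adj] (f : V₁ → V₂)
    (hf : ∀ ⦃v w : V₁⦄, G₁.Adj v w → G₂.Adj (f v) (f w)) :
    ((V₁ ⊕ ↥G₁.edgeSet) → k) →ₗ[k] ((V₂ ⊕ ↥G₂.edgeSet) → k) :=
  (Pi.basisFun k (V₁ ⊕ ↥G₁.edgeSet)).constr k fun i =>
    Pi.single (graphIdxMap G₁ G₂ f hf i) 1

end Morphisms

/-!
Both sides are bilinear in `x, y`, so it suffices to compare them on pairs of basis vectors.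
Distinct basis vectors multiply to zero and, `f` being injective on vertices and hence on
edges, their images are again distinct basis vectors. A square `b_i * b_i` is sent to
`b_{f i} * b_{f i}` because `f` maps the two endpoints of an edge `e` bijectively onto the
endpoints of `f e`.
-/

section Evolution

variable {V : Type*} [Fintype V] [DecidableEq V] (G : SimpleGraph V) [DecidableRel G.Adj]

theorem graphMul_single_single (i j : V ⊕ ↥G.edgeSet) :
    graphMul k G (Pi.single i 1) (Pi.single j 1) = if i = j then graphSq k G i else 0 := by
  rw [graphMul, LinearMap.mk₂_apply, Finset.sum_eq_single i]
  · split_ifs with hij <;> simp [hij]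
  · intro l _ hli
    simp [hli]
  · simp

end Evolution

section Morphisms

variable {V₁ V₂ : Type*} (G₁ : SimpleGraph V₁) (G₂ : SimpleGraph V₂)
  {f : V₁ → V₂} (hf : ∀ ⦃v w : V₁⦄, G₁.Adj v w → G₂.Adj (f v) (f w))

theorem graphIdxMap_injective (hinj : Function.Injective f) :
    Function.Injective (graphIdxMap G₁ G₂ f hf) := by
  rintro (v | e) (w | e') h <;> simp only [graphIdxMap, Sum.inl.injEq, Sum.inr.injEq,
    reduceCtorEq, Subtype.mk.injEq] at h ⊢
  · exact hinj h
  · exact Subtype.ext (Sym2.map.injective hinj h)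

variable [Fintype V₁] [DecidableEq V₁] [DecidableEq V₂] [DecidableRel G₁.Adj]
  [DecidableRel G₂.Adj]

theorem graphXmap_single (i : V₁ ⊕ ↥G₁.edgeSet) :
    graphXmap k G₁ G₂ f hf (Pi.single i 1) = Pi.single (graphIdxMap G₁ G₂ f hf i) 1 := by
  rw [graphXmap, ← Pi.basisFun_apply, Module.Basis.constr_basis]

theorem graphXmap_graphSq [Fintype V₂] (hinj : Function.Injective f) (i : V₁ ⊕ ↥G₁.edgeSet) :
    graphXmap k G₁ G₂ f hf (graphSq k G₁ i) = graphSq k G₂ (graphIdxMap G₁ G₂ f hf i) := by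
  cases i with
  | inl v => exact graphXmap_single k G₁ G₂ hf (Sum.inl v)
  | inr e =>
    have hends : Finset.univ.filter (· ∈ Sym2.map f (e : Sym2 V₁)) =
        (Finset.univ.filter (· ∈ (e : Sym2 V₁))).image f := by
      ext w
      simp [Sym2.mem_map, eq_comm]
    simp only [graphSq, graphIdxMap, map_add, map_sum, graphXmap_single, hends,
      Finset.sum_image fun _ _ _ _ h => hinj h]

end Morphisms

/-- The linear map `X(f)` induced by an (injective) graph morphism `f : G₁ → G₂` is a
homomorphism of `k`-algebras: it commutes with the evolution-algebra multiplications. -/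
theorem graphXmap_mul {V₁ V₂ : Type*} [Fintype V₁] [DecidableEq V₁]
    [Fintype V₂] [DecidableEq V₂]
    (G₁ : SimpleGraph V₁) (G₂ : SimpleGraph V₂)
    [DecidableRel G₁.Adj] [DecidableRel G₂.Adj]
    (f : V₁ → V₂) (hinj : Function.Injective f)
    (hf : ∀ ⦃v w : V₁⦄, G₁.Adj v w → G₂.Adj (f v) (f w)) :
    ∀ x y : (V₁ ⊕ ↥G₁.edgeSet) → k,
      graphXmap k G₁ G₂ f hf (graphMul k G₁ x y) =
        graphMul k G₂ (graphXmap k G₁ G₂ f hf x) (graphXmap k G₁ G₂ f hf y) := by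
  intro x y
  suffices (graphMul k G₁).compr₂ (graphXmap k G₁ G₂ f hf) =
      (graphMul k G₂).compl₁₂ (graphXmap k G₁ G₂ f hf) (graphXmap k G₁ G₂ f hf) from
    LinearMap.congr_fun₂ this x y
  refine LinearMap.ext_basis (Pi.basisFun k _) (Pi.basisFun k _) fun i j => ?_
  have hidx := graphIdxMap_injective G₁ G₂ hf hinj
  simp only [LinearMap.compr₂_apply, LinearMap.compl₁₂_apply, Pi.basisFun_apply,
    graphXmap_single, graphMul_single_single, hidx.eq_iff]
  split_ifs
  · exact graphXmap_graphSq k G₁ G₂ hf hinj i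
  · exact map_zero _
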